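/- Let Φ be a reduced irreducible root system in ℝ^d with d ≥ 2. Then every type-1 decomposition Φ = Φ_1 ⊔ ⋯ ⊔ Φ_s satisfies Σ_{k=1}^s rank Φ_k ≥ d + 1, where rank Φ_k := dim_ℝ span_ℝ Φ_k. -/

import Mathlib

/-!
If the ranks of the parts summed to at most `d`, the spans `V k := span Φ_k`, which together
span `ℝ^d`, would form a direct sum by a dimension count. For roots `α ∈ Φ_k` and `β ∈ Φ_l` with
`k ≠ l`, the root `s_α β = β - c α` lies in some `V m`; comparing components in the direct sum
forces `c α = 0`, i.e. `⟨β, α⟩ = 0`. So `Φ_1` is orthogonal to the remaining roots, contradicting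
irreducibility.
-/

noncomputable section

/-- The standard inner product on `ℝ^d`. -/
def dotR {d : ℕ} (x y : Fin d → ℝ) : ℝ := ∑ i, x i * y i

/-- `Φ` is a root system in `ℝ^d`: a finite set of nonzero vectors spanning `ℝ^d`,
closed under the reflections `s_α`, with integral Cartan numbers. -/
def IsRootSystem {d : ℕ} (Φ : Finset (Fin d → ℝ)) : Prop :=
  (∀ α ∈ Φ, α ≠ 0) ∧
  Submodule.span ℝ (Φ : Set (Fin d → ℝ)) = ⊤ ∧
  (∀ α ∈ Φ, ∀ β ∈ Φ, β - (2 * dotR β α / dotR α α) • α ∈ Φ) ∧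
  (∀ α ∈ Φ, ∀ β ∈ Φ, ∃ n : ℤ, 2 * dotR β α / dotR α α = (n : ℝ))

/-- `Φ` is reduced: the only multiples of a root `α` in `Φ` are `±α`. -/
def IsReducedRS {d : ℕ} (Φ : Finset (Fin d → ℝ)) : Prop :=
  ∀ α ∈ Φ, ∀ t : ℝ, t • α ∈ Φ → t = 1 ∨ t = -1

/-- `Φ` is irreducible: it is not the disjoint union of two nonempty mutually
orthogonal subsets. -/
def IsIrreducibleRS {d : ℕ} (Φ : Finset (Fin d → ℝ)) : Prop :=
  ∀ A B : Set (Fin d → ℝ), (Φ : Set (Fin d → ℝ)) = A ∪ B → Disjoint A B →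
    (∀ a ∈ A, ∀ b ∈ B, dotR a b = 0) → A = ∅ ∨ B = ∅

open Module DirectSum

theorem iSupIndep_of_iSup_eq_top_of_sum_finrank_le {K E ι : Type*} [Field K] [AddCommGroup E]
    [Module K E] [FiniteDimensional K E] [Fintype ι] {V : ι → Submodule K E}
    (htop : ⨆ i, V i = ⊤) (hle : ∑ i, finrank K (V i) ≤ finrank K E) : iSupIndep V := by
  classical
  set f := DFinsupp.lsum ℕ fun i => (V i).subtype
  have hsurj : Function.Surjective f := by
    rw [← LinearMap.range_eq_top, ← Submodule.iSup_eq_range_dfinsupp_lsum, htop]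
  have hdim : finrank K (⨁ i, V i) = finrank K E := by
    refine le_antisymm ((finrank_directSum K _).trans_le hle) ?_
    rw [← finrank_top K E, ← LinearMap.range_eq_top.mpr hsurj]
    exact LinearMap.finrank_range_le f
  exact (iSupIndep_iff_dfinsupp_lsum_injective V).mpr
    ((LinearMap.injective_iff_surjective_of_finrank_eq_finrank hdim).mpr hsurj)

theorem iSupIndep.eq_zero_of_sub_mem {R M ι : Type*} [Ring R] [AddCommGroup M] [Module R M]
    {V : ι → Submodule R M} (hV : iSupIndep V) {k l m : ι} (hkl : k ≠ l) {a b : M}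
    (ha : a ∈ V k) (hb : b ∈ V l) (hb0 : b ≠ 0) (hab : b - a ∈ V m) : a = 0 := by
  by_cases hmk : m = k
  · subst hmk
    have hb' : b ∈ V m := by simpa using add_mem hab ha
    exact absurd (Submodule.disjoint_def.mp (hV.pairwiseDisjoint hkl) b hb' hb) hb0
  · have hle : ∀ j ≠ k, V j ≤ ⨆ (j) (_ : j ≠ k), V j := fun j hj =>
      le_iSup₂ (f := fun j (_ : j ≠ k) => V j) j hj
    refine Submodule.disjoint_def.mp (hV k) a ha ?_
    simpa using sub_mem (hle l hkl.symm hb) (hle m hmk hab)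

theorem dotR_self_ne_zero {d : ℕ} {x : Fin d → ℝ} (hx : x ≠ 0) : dotR x x ≠ 0 :=
  dotProduct_self_eq_zero.not.mpr hx

theorem IsRootSystem.dotR_eq_zero_of_iSupIndep {d : ℕ} {Φ : Finset (Fin d → ℝ)}
    (hRS : IsRootSystem Φ) {ι : Type*} {P : ι → Set (Fin d → ℝ)}
    (hunion : ⋃ k, P k = (Φ : Set (Fin d → ℝ)))
    (hV : iSupIndep fun k => Submodule.span ℝ (P k)) {k l : ι} (hkl : k ≠ l)
    {α β : Fin d → ℝ} (hα : α ∈ P k) (hβ : β ∈ P l) : dotR β α = 0 := by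
  obtain ⟨hnz, -, hrefl, -⟩ := hRS
  have hmem : ∀ {γ k}, γ ∈ P k → γ ∈ Φ := fun hγ =>
    Finset.mem_coe.mp (hunion ▸ Set.mem_iUnion_of_mem _ hγ)
  have hαΦ := hmem hα
  obtain ⟨m, hm⟩ :=
    Set.mem_iUnion.mp (hunion.symm ▸ Finset.mem_coe.mpr (hrefl α hαΦ β (hmem hβ)))
  have hc : (2 * dotR β α / dotR α α) • α = 0 :=
    hV.eq_zero_of_sub_mem hkl (Submodule.smul_mem _ _ (Submodule.subset_span hα))
      (Submodule.subset_span hβ) (hnz β (hmem hβ)) (Submodule.subset_span hm)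
  have := dotR_self_ne_zero (hnz α hαΦ)
  simpa [smul_eq_zero, hnz α hαΦ, this] using hc

theorem IsIrreducibleRS.eq_empty_or_eq {d : ℕ} {Φ : Finset (Fin d → ℝ)}
    (hirr : IsIrreducibleRS Φ) {A : Set (Fin d → ℝ)} (hA : A ⊆ Φ)
    (horth : ∀ a ∈ A, ∀ b ∈ (Φ : Set (Fin d → ℝ)) \ A, dotR a b = 0) :
    A = ∅ ∨ A = Φ :=
  (hirr A _ (Set.union_sdiff_cancel hA).symm Set.disjoint_sdiff_right horth).imp_right fun h =>
    hA.antisymm (Set.sdiff_eq_empty.mp h)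

theorem stmt3 {d : ℕ} (Φ : Finset (Fin d → ℝ))
    (hRS : IsRootSystem Φ) (hirr : IsIrreducibleRS Φ)
    (s : ℕ) (hs : 1 ≤ s) (P : Fin s → Set (Fin d → ℝ))
    (hne : ∀ k, (P k).Nonempty)
    (hproper : ∀ k, P k ⊂ (Φ : Set (Fin d → ℝ)))
    (hunion : (⋃ k, P k) = (Φ : Set (Fin d → ℝ))) :
    d + 1 ≤ ∑ k, Module.finrank ℝ ↥(Submodule.span ℝ (P k)) := by
  by_contra! hlt
  have hV : iSupIndep fun k => Submodule.span ℝ (P k) := by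
    refine iSupIndep_of_iSup_eq_top_of_sum_finrank_le ?_ ?_
    · rw [← Submodule.span_iUnion, hunion, hRS.2.1]
    · rw [finrank_fin_fun]
      omega
  let k₀ : Fin s := ⟨0, hs⟩
  have horth : ∀ a ∈ P k₀, ∀ b ∈ (Φ : Set (Fin d → ℝ)) \ P k₀, dotR a b = 0 := by
    rintro a ha b ⟨hbΦ, hbk₀⟩
    obtain ⟨l, hbl⟩ := Set.mem_iUnion.mp (hunion ▸ hbΦ)
    exact hRS.dotR_eq_zero_of_iSupIndep hunion hV (fun h : l = k₀ => hbk₀ (h ▸ hbl)) hbl ha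
  rcases hirr.eq_empty_or_eq (hproper k₀).subset horth with h | h
  · exact (hne k₀).ne_empty h
  · exact (hproper k₀).ne h

end
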